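/- The private partition selection mechanism PPS is (ε, δ)-DP when each record contributes at most one element (k = 1): the mechanism that, for each candidate element ω, computes its count c_ω (the number of records containing ω), adds independent truncated discrete Laplace noise Z_ω ∼ DLap_τ(ε) with τ = ⌈(1/ε) log((e^{ε} + 2δ - 1)/((e^{ε} + 1)δ))⌉, and releases ω iff c_ω + Z_ω > τ, satisfies (ε, δ)-differential privacy with respect to adding or removing one record. -/

import Mathlib

open scoped ENNReal

/-- Two multisets are adjacent if one is obtained from the other by adding or
removing one record. -/
def Adjacent {α : Type*} (x x' : Multiset α) : Prop :=
  (∃ a, x' = a ::ₘ x) ∨ (∃ a, x = a ::ₘ x')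

/-- Probability that the (random) output of `μ` lies in `E`. -/
noncomputable def Pr {Y : Type*} (μ : PMF Y) (E : Set Y) : ℝ≥0∞ := μ.toOuterMeasure E

/-- `(ε, δ)`-differential privacy for a mechanism on multiset datasets. -/
def IsDP {α Y : Type*} (M : Multiset α → PMF Y) (ε δ : ℝ) : Prop :=
  ∀ x x' : Multiset α, Adjacent x x' → ∀ E : Set Y,
    Pr (M x) E ≤ ENNReal.ofReal (Real.exp ε) * Pr (M x') E + ENNReal.ofReal δ


/-- The probability mass of the truncated discrete Laplace distribution
`DLap_τ(ε)`, supported on `[-τ, τ]`. -/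
noncomputable def dlapTruncMass (ε : ℝ) (τ : ℤ) (z : ℤ) : ℝ :=
  if |z| ≤ τ then
    ((1 - Real.exp (-ε)) / (1 + Real.exp (-ε) - 2 * Real.exp (-ε * (τ + 1)))) *
      Real.exp (-ε * |(z : ℝ)|)
  else 0

/-- `Pr_{Z ∼ DLap_τ(ε)}[c + Z > τ]`: the probability that an element with count
`c` is released by the thresholding rule. -/
noncomputable def releaseProb (ε : ℝ) (τ : ℤ) (c : ℕ) : ℝ :=
  ∑ z ∈ Finset.Ioc (τ - (c : ℤ)) τ, dlapTruncMass ε τ z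

/-- The candidate elements of a dataset: the union of all its records. -/
def candidates {Ω : Type*} [DecidableEq Ω] (D : Multiset (Finset Ω)) : Finset Ω :=
  D.toFinset.sup id

/-- The count `c_ω` of an element: the number of records containing it. -/
def elemCount {Ω : Type*} [DecidableEq Ω] (D : Multiset (Finset Ω)) (ω : Ω) : ℕ :=
  (D.filter fun h => ω ∈ h).card

/-!
Adjacent datasets differ in the count of a single element `ω₀`, by one, since each record holds
at most one element; every other element is kept by an independent coin with the same bias in
both datasets. The output law is a product of independent Bernoulli coins, so it suffices that
the coin for `ω₀`, with bias `p(c) = Pr[c + Z > τ]`, is `(ε, δ)`-indistinguishable from the coin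
with bias `p(c + 1)`, for both outcomes and in both directions. Shifting the noise by one changes
its mass by a factor at most `e^ε`, except at the boundary point `τ` (or `-τ`), whose mass is at
most `δ` by the choice of `τ`. Since `p(0) = 0`, this also covers an element that is a candidate
of only one of the two datasets.
-/

open Finset Real

section DiscreteLaplace

variable {ε δ : ℝ} {τ : ℤ}

lemma dlapTruncMass_neg (ε : ℝ) (τ z : ℤ) : dlapTruncMass ε τ (-z) = dlapTruncMass ε τ z := by
  simp [dlapTruncMass]

lemma dlapTruncMass_eq_zero {z : ℤ} (h : τ < |z|) : dlapTruncMass ε τ z = 0 :=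
  if_neg h.not_ge

lemma dlap_denominator_pos (hε : 0 < ε) (hτ : 0 ≤ τ) :
    0 < 1 + exp (-ε) - 2 * exp (-ε * (τ + 1)) := by
  have hrτ : exp (-ε * (τ + 1)) ≤ exp (-ε) :=
    exp_le_exp.mpr (by nlinarith [(by exact_mod_cast hτ : (0 : ℝ) ≤ τ)])
  linarith [exp_lt_one_iff.mpr (neg_lt_zero.mpr hε)]

lemma dlap_normalizer_pos (hε : 0 < ε) (hτ : 0 ≤ τ) :
    0 < (1 - exp (-ε)) / (1 + exp (-ε) - 2 * exp (-ε * (τ + 1))) :=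
  div_pos (sub_pos.mpr (exp_lt_one_iff.mpr (neg_lt_zero.mpr hε))) (dlap_denominator_pos hε hτ)

lemma dlapTruncMass_nonneg (hε : 0 < ε) (hτ : 0 ≤ τ) (z : ℤ) : 0 ≤ dlapTruncMass ε τ z := by
  have := dlap_normalizer_pos hε hτ
  unfold dlapTruncMass
  split_ifs <;> positivity

lemma dlapTruncMass_le_exp_mul_succ (hε : 0 < ε) (hτ : 0 ≤ τ) {z : ℤ} (hz : z < τ) :
    dlapTruncMass ε τ z ≤ exp ε * dlapTruncMass ε τ (z + 1) := by
  by_cases hzτ : |z| ≤ τ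
  · have hz1 : |z + 1| ≤ τ := abs_le.mpr (by have := abs_le.mp hzτ; omega)
    have habs : |(z : ℝ) + 1| ≤ |(z : ℝ)| + 1 := (abs_add_le _ _).trans_eq (by rw [abs_one])
    have := dlap_normalizer_pos hε hτ
    simp only [dlapTruncMass, if_pos hzτ, if_pos hz1, Int.cast_add, Int.cast_one]
    rw [mul_left_comm, ← exp_add]
    gcongr
    nlinarith
  · rw [dlapTruncMass_eq_zero (not_le.mp hzτ)]
    exact mul_nonneg (exp_pos ε).le (dlapTruncMass_nonneg hε hτ _)

lemma one_sub_exp_neg_mul_sum_exp_abs (ε : ℝ) (n : ℕ) :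
    (1 - exp (-ε)) * ∑ z ∈ Ioc (-(n : ℤ) - 1) n, exp (-ε * |(z : ℝ)|) =
      1 + exp (-ε) - 2 * exp (-ε * (n + 1)) := by
  induction n with
  | zero =>
    rw [show Ioc (-((0 : ℕ) : ℤ) - 1) (0 : ℕ) = {0} by ext; simp; omega]
    simp only [sum_singleton, Int.cast_zero, abs_zero, mul_zero, neg_zero, Real.exp_zero, mul_one,
      Nat.cast_zero, zero_add, neg_mul]
    ring
  | succ n ih =>
    have hIoc : Ioc (-((n + 1 : ℕ) : ℤ) - 1) (n + 1 : ℕ) =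
        insert (-(n + 1 : ℤ)) (insert (n + 1 : ℤ) (Ioc (-(n : ℤ) - 1) n)) := by
      ext z; simp; omega
    have hstep : exp (-ε * (n + 1)) * exp (-ε) = exp (-ε * (n + 1 + 1)) := by
      rw [← exp_add]; ring_nf
    rw [hIoc, sum_insert (by simp; omega), sum_insert (by simp), mul_add, mul_add, ih]
    push_cast
    rw [abs_neg, abs_of_nonneg (by positivity)]
    linarith

/-- `Pr_{Z ∼ DLap_τ(ε)}[Z > a]`. -/
noncomputable def dlapTail (ε : ℝ) (τ a : ℤ) : ℝ :=
  ∑ z ∈ Ioc a τ, dlapTruncMass ε τ z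

lemma dlapTail_nonneg (hε : 0 < ε) (hτ : 0 ≤ τ) (a : ℤ) : 0 ≤ dlapTail ε τ a :=
  sum_nonneg fun z _ => dlapTruncMass_nonneg hε hτ z

lemma dlapTail_self (ε : ℝ) (τ : ℤ) : dlapTail ε τ τ = 0 := by
  simp [dlapTail]

lemma dlapTail_sub_one (hτ : 0 ≤ τ) (a : ℤ) :
    dlapTail ε τ (a - 1) = dlapTruncMass ε τ a + dlapTail ε τ a := by
  unfold dlapTail
  by_cases ha : a ≤ τ
  · rw [show Ioc (a - 1) τ = Icc a τ by ext; simp, ← Ioc_insert_left ha,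
      sum_insert (by simp)]
  · rw [Ioc_eq_empty (by omega), Ioc_eq_empty (by omega),
      dlapTruncMass_eq_zero (by rw [abs_of_pos (by omega)]; omega)]
    simp

lemma dlapTail_neg_sub_one (hε : 0 < ε) (hτ : 0 ≤ τ) : dlapTail ε τ (-τ - 1) = 1 := by
  have hden := dlap_denominator_pos hε hτ
  lift τ to ℕ using hτ
  have hmass : ∀ z ∈ Ioc (-(τ : ℤ) - 1) τ, dlapTruncMass ε τ z =
      (1 - exp (-ε)) / (1 + exp (-ε) - 2 * exp (-ε * (τ + 1))) * exp (-ε * |(z : ℝ)|) := by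
    intro z hz
    rw [dlapTruncMass, if_pos (abs_le.mpr (by simp at hz; omega))]
    norm_cast
  push_cast at hden
  rw [dlapTail, sum_congr rfl hmass, ← mul_sum, div_mul_eq_mul_div,
    one_sub_exp_neg_mul_sum_exp_abs, div_self hden.ne']

lemma dlapTail_add_dlapTail_neg_sub_one (hε : 0 < ε) (hτ : 0 ≤ τ) (a : ℤ) :
    dlapTail ε τ a + dlapTail ε τ (-a - 1) = 1 := by
  -- By symmetry the second tail is `Pr[Z ≤ a]`; the sum is constant in `a` and is `1` at `a = τ`.
  have hstep : ∀ b, dlapTail ε τ (b - 1) + dlapTail ε τ (-(b - 1) - 1) =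
      dlapTail ε τ b + dlapTail ε τ (-b - 1) := by
    intro b
    rw [dlapTail_sub_one hτ b, show -(b - 1) - 1 = -b by ring, dlapTail_sub_one hτ (-b),
      dlapTruncMass_neg]
    ring
  induction a using Int.inductionOn' (b := τ) with
  | zero => rw [dlapTail_self, dlapTail_neg_sub_one hε hτ, zero_add]
  | succ k _ ih => rwa [← hstep (k + 1), add_sub_cancel_right]
  | pred k _ ih => rwa [hstep k]

lemma dlapTail_sub_one_le (hε : 0 < ε) (hτ : 0 ≤ τ) (hmτ : dlapTruncMass ε τ τ ≤ δ) (a : ℤ) :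
    dlapTail ε τ (a - 1) ≤ exp ε * dlapTail ε τ a + δ := by
  -- Shifting each `z ∈ (a - 1, τ - 1]` up by one costs a factor `e^ε`; the point `τ` costs `δ`.
  by_cases ha : a ≤ τ
  · induction a, ha using Int.leInductionDown with
    | base => simpa [dlapTail_sub_one hτ τ, dlapTail_self] using hmτ
    | pred n hn ih =>
      have hshift := dlapTruncMass_le_exp_mul_succ hε hτ (z := n - 1) (by omega)
      rw [sub_add_cancel] at hshift
      rw [dlapTail_sub_one hτ n] at ih
      rw [dlapTail_sub_one hτ (n - 1), dlapTail_sub_one hτ n, mul_add]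
      linarith
  · have hT := dlapTail_nonneg hε hτ a
    have hδ := (dlapTruncMass_nonneg hε hτ τ).trans hmτ
    rw [dlapTail, Ioc_eq_empty (by omega), sum_empty]
    positivity

end DiscreteLaplace

section ReleaseProbability

variable {ε δ : ℝ} {τ : ℤ}

lemma releaseProb_eq_dlapTail (ε : ℝ) (τ : ℤ) (c : ℕ) :
    releaseProb ε τ c = dlapTail ε τ (τ - c) := rfl

lemma releaseProb_zero (ε : ℝ) (τ : ℤ) : releaseProb ε τ 0 = 0 := by
  simp [releaseProb_eq_dlapTail, dlapTail_self]

lemma releaseProb_nonneg (hε : 0 < ε) (hτ : 0 ≤ τ) (c : ℕ) : 0 ≤ releaseProb ε τ c :=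
  dlapTail_nonneg hε hτ _

lemma one_sub_releaseProb (hε : 0 < ε) (hτ : 0 ≤ τ) (c : ℕ) :
    1 - releaseProb ε τ c = dlapTail ε τ (c - τ - 1) := by
  rw [releaseProb_eq_dlapTail, ← dlapTail_add_dlapTail_neg_sub_one hε hτ (τ - c)]
  ring_nf

lemma releaseProb_le_one (hε : 0 < ε) (hτ : 0 ≤ τ) (c : ℕ) : releaseProb ε τ c ≤ 1 := by
  linarith [one_sub_releaseProb hε hτ c, dlapTail_nonneg hε hτ (c - τ - 1)]

lemma releaseProb_le_succ (hε : 0 < ε) (hτ : 0 ≤ τ) (c : ℕ) :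
    releaseProb ε τ c ≤ releaseProb ε τ (c + 1) := by
  rw [releaseProb_eq_dlapTail, releaseProb_eq_dlapTail, Nat.cast_succ, ← sub_sub,
    dlapTail_sub_one hτ]
  linarith [dlapTruncMass_nonneg hε hτ (τ - c)]

lemma releaseProb_succ_le (hε : 0 < ε) (hτ : 0 ≤ τ) (hmτ : dlapTruncMass ε τ τ ≤ δ) (c : ℕ) :
    releaseProb ε τ (c + 1) ≤ exp ε * releaseProb ε τ c + δ := by
  simpa [releaseProb_eq_dlapTail, sub_add_eq_sub_sub] using
    dlapTail_sub_one_le hε hτ hmτ (τ - c)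

lemma one_sub_releaseProb_le (hε : 0 < ε) (hτ : 0 ≤ τ) (hmτ : dlapTruncMass ε τ τ ≤ δ)
    (c : ℕ) : 1 - releaseProb ε τ c ≤ exp ε * (1 - releaseProb ε τ (c + 1)) + δ := by
  rw [one_sub_releaseProb hε hτ, one_sub_releaseProb hε hτ, Nat.cast_succ,
    show (c : ℤ) + 1 - τ - 1 = c - τ by ring]
  exact dlapTail_sub_one_le hε hτ hmτ (c - τ)

end ReleaseProbability

section Threshold

variable {ε δ : ℝ} {τ : ℤ}

lemma dlapTruncMass_self (hε : 0 < ε) (hτ : 0 ≤ τ) :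
    dlapTruncMass ε τ τ = (exp ε - 1) / ((exp ε + 1) * exp (ε * τ) - 2) := by
  have hτ' : (0 : ℝ) ≤ τ := by exact_mod_cast hτ
  have hX : 1 < exp ε := one_lt_exp_iff.mpr hε
  have hW : 1 ≤ exp (ε * τ) := one_le_exp (by positivity)
  have hden : (exp ε + 1) * exp (ε * τ) - 2 ≠ 0 := by nlinarith
  rw [dlapTruncMass, if_pos (abs_of_nonneg hτ).le, abs_of_nonneg hτ',
    show -ε * (τ + 1) = -(ε * τ) + -ε by ring, neg_mul, exp_add, exp_neg, exp_neg]
  field_simp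

lemma dlapTruncMass_self_le (hε : 0 < ε) (hδ : 0 < δ) (hτ : 0 ≤ τ)
    (h : (exp ε + 2 * δ - 1) / ((exp ε + 1) * δ) ≤ exp (ε * τ)) :
    dlapTruncMass ε τ τ ≤ δ := by
  have hX : 1 < exp ε := one_lt_exp_iff.mpr hε
  have hW : 1 ≤ exp (ε * τ) := one_le_exp (mul_nonneg hε.le (by exact_mod_cast hτ))
  rw [div_le_iff₀ (by positivity)] at h
  rw [dlapTruncMass_self hε hτ, div_le_iff₀ (by nlinarith)]
  linarith

lemma one_le_pps_ratio (hε : 0 ≤ ε) (hδ0 : 0 < δ) (hδ1 : δ ≤ 1) :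
    1 ≤ (exp ε + 2 * δ - 1) / ((exp ε + 1) * δ) := by
  have hX : 1 ≤ exp ε := one_le_exp hε
  rw [one_le_div (by positivity)]
  nlinarith [mul_nonneg (sub_nonneg.mpr hX) (sub_nonneg.mpr hδ1)]

lemma le_exp_mul_ceil_log {A : ℝ} (hε : 0 < ε) (hA : 0 < A) :
    A ≤ exp (ε * ⌈(1 / ε) * log A⌉) := by
  rw [← log_le_iff_le_exp hA]
  have := mul_le_mul_of_nonneg_left (Int.le_ceil ((1 / ε) * log A)) hε.le
  rwa [← mul_assoc, mul_one_div_cancel hε.ne', one_mul] at this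

end Threshold

lemma sum_mul_le_mul_sum_mul_add {ι : Type*} {s : Finset ι} {w X Y : ι → ℝ≥0∞} {a d : ℝ≥0∞}
    (hw : ∑ i ∈ s, w i = 1) (h : ∀ i ∈ s, X i ≤ a * Y i + d) :
    ∑ i ∈ s, w i * X i ≤ a * ∑ i ∈ s, w i * Y i + d :=
  calc ∑ i ∈ s, w i * X i ≤ ∑ i ∈ s, w i * (a * Y i + d) := by gcongr with i hi; exact h i hi
    _ = a * ∑ i ∈ s, w i * Y i + d * ∑ i ∈ s, w i := by
      rw [mul_sum, mul_sum, ← sum_add_distrib]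
      exact sum_congr rfl fun i _ => by ring
    _ = a * ∑ i ∈ s, w i * Y i + d := by rw [hw, mul_one]

section BernoulliProduct

variable {Ω : Type*} [DecidableEq Ω]

noncomputable def bernoulliWeight (C : Finset Ω) (f : Ω → ℝ) (S : Finset Ω) : ℝ≥0∞ :=
  (∏ ω ∈ S, ENNReal.ofReal (f ω)) * ∏ ω ∈ C \ S, ENNReal.ofReal (1 - f ω)

def IsBernoulliProduct (μ : PMF (Set Ω)) (C : Finset Ω) (f : Ω → ℝ) : Prop :=
  (∀ S ⊆ C, μ S = bernoulliWeight C f S) ∧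
    ∀ T : Set Ω, (¬ ∃ S : Finset Ω, ↑S = T ∧ S ⊆ C) → μ T = 0

open Classical in
noncomputable def bernoulliProb (C : Finset Ω) (f : Ω → ℝ) (E : Set (Set Ω)) : ℝ≥0∞ :=
  ∑ S ∈ C.powerset, if (S : Set Ω) ∈ E then bernoulliWeight C f S else 0

variable {C C₀ R S : Finset Ω} {f g : Ω → ℝ} {ω₀ : Ω}

lemma bernoulliWeight_eq_of_subset (hC : C₀ ⊆ C) (hf : ∀ ω ∈ C, ω ∉ C₀ → f ω = 0) :
    bernoulliWeight C f S = bernoulliWeight C₀ f S := by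
  refine congrArg _ (prod_subset (sdiff_subset_sdiff hC le_rfl) fun ω hω hω₀ => ?_).symm
  rw [mem_sdiff] at hω hω₀
  simp [hf ω hω.1 fun h => hω₀ ⟨h, hω.2⟩]

lemma bernoulliWeight_eq_zero (hω : ω₀ ∈ S) (hf : f ω₀ = 0) : bernoulliWeight C f S = 0 :=
  mul_eq_zero_of_left (prod_eq_zero hω (by simp [hf])) _

lemma bernoulliWeight_congr (h : ∀ ω ∈ C, f ω = g ω) (hS : S ⊆ C) :
    bernoulliWeight C f S = bernoulliWeight C g S := by
  rw [bernoulliWeight, bernoulliWeight,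
    prod_congr rfl fun ω hω => congrArg ENNReal.ofReal (h ω (hS hω)),
    prod_congr rfl fun ω hω => congrArg (ENNReal.ofReal <| 1 - ·) (h ω (mem_sdiff.mp hω).1)]

lemma sum_bernoulliWeight (hf0 : ∀ ω ∈ R, 0 ≤ f ω) (hf1 : ∀ ω ∈ R, f ω ≤ 1) :
    ∑ S ∈ R.powerset, bernoulliWeight R f S = 1 := by
  rw [← prod_eq_one fun ω hω => ?_]
  · exact (prod_add _ _ R).symm
  · rw [← ENNReal.ofReal_add (hf0 ω hω) (sub_nonneg.mpr (hf1 ω hω)), add_sub_cancel,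
      ENNReal.ofReal_one]

lemma bernoulliWeight_insert (hω₀ : ω₀ ∉ R) (hS : S ⊆ R) :
    bernoulliWeight (insert ω₀ R) f S = ENNReal.ofReal (1 - f ω₀) * bernoulliWeight R f S := by
  rw [bernoulliWeight, bernoulliWeight, insert_sdiff_of_notMem _ fun h => hω₀ (hS h),
    prod_insert fun h => hω₀ (mem_sdiff.mp h).1]
  ring

lemma bernoulliWeight_insert_insert (hω₀ : ω₀ ∉ R) (hS : S ⊆ R) :
    bernoulliWeight (insert ω₀ R) f (insert ω₀ S) =
      ENNReal.ofReal (f ω₀) * bernoulliWeight R f S := by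
  rw [bernoulliWeight, bernoulliWeight, insert_sdiff_insert, sdiff_insert_of_notMem hω₀,
    prod_insert fun h => hω₀ (hS h)]
  ring

lemma IsBernoulliProduct.mono {μ : PMF (Set Ω)} (hμ : IsBernoulliProduct μ C₀ f) (hC : C₀ ⊆ C)
    (hf : ∀ ω ∈ C, ω ∉ C₀ → f ω = 0) : IsBernoulliProduct μ C f := by
  refine ⟨fun S hS => ?_, fun T hT => hμ.2 T fun ⟨S, hST, hS⟩ => hT ⟨S, hST, hS.trans hC⟩⟩
  by_cases hS₀ : S ⊆ C₀
  · rw [hμ.1 S hS₀, bernoulliWeight_eq_of_subset hC hf]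
  · obtain ⟨ω, hωS, hωC₀⟩ := not_subset.mp hS₀
    rw [hμ.2 S fun ⟨S', hS', hS'C₀⟩ => hS₀ (coe_injective hS' ▸ hS'C₀),
      bernoulliWeight_eq_zero hωS (hf ω (hS hωS) hωC₀)]

open Classical in
lemma IsBernoulliProduct.pr_eq {μ : PMF (Set Ω)} (hμ : IsBernoulliProduct μ C f)
    (E : Set (Set Ω)) : Pr μ E = bernoulliProb C f E := by
  rw [Pr, PMF.toOuterMeasure_apply, tsum_eq_sum (s := C.powerset.image (↑)) fun T hT => ?_,
    sum_image fun _ _ _ _ h => coe_injective h]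
  · refine sum_congr rfl fun S hS => ?_
    rw [Set.indicator_apply, hμ.1 S (mem_powerset.mp hS)]
  · refine Set.indicator_apply_eq_zero.mpr fun _ => hμ.2 T fun ⟨S, hST, hS⟩ => hT ?_
    exact mem_image.mpr ⟨S, mem_powerset.mpr hS, hST⟩

open Classical in
lemma bernoulliProb_insert (hω₀ : ω₀ ∉ R) (E : Set (Set Ω)) :
    bernoulliProb (insert ω₀ R) f E = ∑ S ∈ R.powerset, bernoulliWeight R f S *
      ((if (S : Set Ω) ∈ E then ENNReal.ofReal (1 - f ω₀) else 0) +
        (if (↑(insert ω₀ S) : Set Ω) ∈ E then ENNReal.ofReal (f ω₀) else 0)) := by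
  rw [bernoulliProb, sum_powerset_insert hω₀, ← sum_add_distrib]
  refine sum_congr rfl fun S hS => ?_
  rw [bernoulliWeight_insert hω₀ (mem_powerset.mp hS),
    bernoulliWeight_insert_insert hω₀ (mem_powerset.mp hS)]
  split_ifs <;> ring

-- The coins of biases `q` and `p` compared on an event: `A` says it contains tails, `B` heads.
lemma bernoulli_ite_le {ε δ p q : ℝ} (A B : Prop) [Decidable A] [Decidable B]
    (hε : 0 ≤ ε) (hδ : 0 ≤ δ) (hp0 : 0 ≤ p) (hp1 : p ≤ 1) (hq0 : 0 ≤ q) (hq1 : q ≤ 1)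
    (h1 : q ≤ exp ε * p + δ) (h0 : 1 - q ≤ exp ε * (1 - p) + δ) :
    (if A then ENNReal.ofReal (1 - q) else 0) + (if B then ENNReal.ofReal q else 0) ≤
      ENNReal.ofReal (exp ε) *
        ((if A then ENNReal.ofReal (1 - p) else 0) + (if B then ENNReal.ofReal p else 0)) +
      ENNReal.ofReal δ := by
  have key : ∀ a b : ℝ, 0 ≤ b → a ≤ exp ε * b + δ →
      ENNReal.ofReal a ≤ ENNReal.ofReal (exp ε) * ENNReal.ofReal b + ENNReal.ofReal δ := by
    intro a b hb h
    rw [← ENNReal.ofReal_mul (exp_pos ε).le, ← ENNReal.ofReal_add (by positivity) hδ]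
    exact ENNReal.ofReal_le_ofReal h
  split_ifs
  · rw [← ENNReal.ofReal_add (by linarith) hq0, ← ENNReal.ofReal_add (by linarith) hp0]
    exact key _ _ (by linarith) (by linarith [one_le_exp hε])
  · simpa using key _ _ (by linarith) h0
  · simpa using key _ _ hp0 h1
  · simp

lemma bernoulliProb_insert_le {ε δ : ℝ} (hω₀ : ω₀ ∉ R) (hfg : ∀ ω ∈ R, f ω = g ω)
    (hf0 : ∀ ω ∈ R, 0 ≤ f ω) (hf1 : ∀ ω ∈ R, f ω ≤ 1) (hε : 0 ≤ ε) (hδ : 0 ≤ δ)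
    (hp0 : 0 ≤ g ω₀) (hp1 : g ω₀ ≤ 1) (hq0 : 0 ≤ f ω₀) (hq1 : f ω₀ ≤ 1)
    (h1 : f ω₀ ≤ exp ε * g ω₀ + δ) (h0 : 1 - f ω₀ ≤ exp ε * (1 - g ω₀) + δ)
    (E : Set (Set Ω)) :
    bernoulliProb (insert ω₀ R) f E ≤
      ENNReal.ofReal (exp ε) * bernoulliProb (insert ω₀ R) g E + ENNReal.ofReal δ := by
  classical
  rw [bernoulliProb_insert hω₀, bernoulliProb_insert hω₀]
  refine (sum_mul_le_mul_sum_mul_add (sum_bernoulliWeight hf0 hf1)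
    fun S _ => bernoulli_ite_le _ _ hε hδ hp0 hp1 hq0 hq1 h1 h0).trans_eq ?_
  congr 2
  exact sum_congr rfl fun S hS => by rw [bernoulliWeight_congr hfg (mem_powerset.mp hS)]

lemma IsBernoulliProduct.pr_le {μ ν : PMF (Set Ω)} {ε δ : ℝ} (hμ : IsBernoulliProduct μ C f)
    (hν : IsBernoulliProduct ν C g) (hω₀ : ω₀ ∈ C) (hfg : ∀ ω ∈ C, ω ≠ ω₀ → f ω = g ω)
    (hf0 : ∀ ω ∈ C, 0 ≤ f ω) (hf1 : ∀ ω ∈ C, f ω ≤ 1) (hp0 : 0 ≤ g ω₀) (hp1 : g ω₀ ≤ 1)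
    (hε : 0 ≤ ε) (hδ : 0 ≤ δ)
    (h1 : f ω₀ ≤ exp ε * g ω₀ + δ) (h0 : 1 - f ω₀ ≤ exp ε * (1 - g ω₀) + δ)
    (E : Set (Set Ω)) : Pr μ E ≤ ENNReal.ofReal (exp ε) * Pr ν E + ENNReal.ofReal δ := by
  rw [hμ.pr_eq, hν.pr_eq, ← insert_erase hω₀]
  exact bernoulliProb_insert_le (notMem_erase ω₀ C)
    (fun ω hω => hfg ω (mem_of_mem_erase hω) (ne_of_mem_erase hω))
    (fun ω hω => hf0 ω (mem_of_mem_erase hω)) (fun ω hω => hf1 ω (mem_of_mem_erase hω))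
    hε hδ hp0 hp1 (hf0 ω₀ hω₀) (hf1 ω₀ hω₀) h1 h0 E

end BernoulliProduct

section PrivatePartitionSelection

variable {Ω : Type*} [DecidableEq Ω]

lemma candidates_cons (a : Finset Ω) (y : Multiset (Finset Ω)) :
    candidates (a ::ₘ y) = a ∪ candidates y := by
  simp [candidates]

lemma elemCount_cons (a : Finset Ω) (y : Multiset (Finset Ω)) (ω : Ω) :
    elemCount (a ::ₘ y) ω = elemCount y ω + if ω ∈ a then 1 else 0 := by
  unfold elemCount
  rw [Multiset.filter_cons]
  split_ifs <;> simp

lemma elemCount_eq_zero {D : Multiset (Finset Ω)} {ω : Ω} (hω : ω ∉ candidates D) :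
    elemCount D ω = 0 := by
  rw [elemCount, Multiset.card_eq_zero, Multiset.filter_eq_nil]
  exact fun h hD hωh => hω (le_sup (f := id) (Multiset.mem_toFinset.mpr hD) hωh)

variable {ε δ : ℝ} {τ : ℤ}

lemma pr_cons_le (hε : 0 < ε) (hτ : 0 ≤ τ) (hmτ : dlapTruncMass ε τ τ ≤ δ)
    {μ ν : PMF (Set Ω)} {y : Multiset (Finset Ω)} {a : Finset Ω} (ha : a.card ≤ 1)
    (hμ : IsBernoulliProduct μ (candidates y) fun ω => releaseProb ε τ (elemCount y ω))
    (hν : IsBernoulliProduct ν (candidates (a ::ₘ y))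
      fun ω => releaseProb ε τ (elemCount (a ::ₘ y) ω))
    (E : Set (Set Ω)) :
    Pr μ E ≤ ENNReal.ofReal (exp ε) * Pr ν E + ENNReal.ofReal δ ∧
      Pr ν E ≤ ENNReal.ofReal (exp ε) * Pr μ E + ENNReal.ofReal δ := by
  have hδ : 0 ≤ δ := (dlapTruncMass_nonneg hε hτ τ).trans hmτ
  rcases Nat.le_one_iff_eq_zero_or_eq_one.mp ha with ha | ha
  · obtain rfl := card_eq_zero.mp ha
    have hPr : Pr ν E = Pr μ E := by
      rw [hν.pr_eq, hμ.pr_eq]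
      simp [candidates_cons, elemCount_cons]
    have hle : Pr μ E ≤ ENNReal.ofReal (exp ε) * Pr μ E + ENNReal.ofReal δ :=
      le_add_right (le_mul_of_one_le_left' (ENNReal.one_le_ofReal.mpr (one_le_exp hε.le)))
    exact ⟨hPr ▸ hle, hPr ▸ hle⟩
  · obtain ⟨ω₀, rfl⟩ := card_eq_one.mp ha
    set C := insert ω₀ (candidates y)
    have hμ' : IsBernoulliProduct μ C fun ω => releaseProb ε τ (elemCount y ω) :=
      hμ.mono (subset_insert _ _) fun ω _ hω => by
        rw [elemCount_eq_zero hω, releaseProb_zero]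
    have hν' : IsBernoulliProduct ν C fun ω => releaseProb ε τ (elemCount ({ω₀} ::ₘ y) ω) := by
      rwa [candidates_cons, ← insert_eq] at hν
    have hfg : ∀ ω ∈ C, ω ≠ ω₀ →
        releaseProb ε τ (elemCount y ω) = releaseProb ε τ (elemCount ({ω₀} ::ₘ y) ω) :=
      fun ω _ hω => by simp [elemCount_cons, hω]
    have hc : elemCount ({ω₀} ::ₘ y) ω₀ = elemCount y ω₀ + 1 := by simp [elemCount_cons]
    have hmono := releaseProb_le_succ hε hτ (elemCount y ω₀)
    have h0 := releaseProb_nonneg hε hτ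
    have h1 := releaseProb_le_one hε hτ
    have hX := one_le_exp hε.le
    constructor
    · refine hμ'.pr_le hν' (mem_insert_self _ _) hfg (fun ω _ => h0 _) (fun ω _ => h1 _)
        (h0 _) (h1 _) hε.le hδ ?_ ?_ E <;> simp only [hc]
      · nlinarith [h0 (elemCount y ω₀ + 1)]
      · exact one_sub_releaseProb_le hε hτ hmτ _
    · refine hν'.pr_le hμ' (mem_insert_self _ _) (fun ω hω hne => (hfg ω hω hne).symm)
        (fun ω _ => h0 _) (fun ω _ => h1 _) (h0 _) (h1 _) hε.le hδ ?_ ?_ E <;> simp only [hc]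
      · exact releaseProb_succ_le hε hτ hmτ _
      · nlinarith [h1 (elemCount y ω₀)]

end PrivatePartitionSelection

/-- Private partition selection with per-record contribution `k = 1` is
`(ε, δ)`-DP: the mechanism that adds independent `DLap_τ(ε)` noise, with
`τ = ⌈(1/ε) log((e^ε + 2δ - 1)/((e^ε + 1)δ))⌉`, to the count of each candidate
element and releases exactly the elements whose noisy count exceeds `τ`,
satisfies `(ε, δ)`-DP on datasets whose records each contain at most one
element. -/
theorem pps_is_dp {Ω : Type*} [DecidableEq Ω] (ε δ : ℝ) (hε : 0 < ε)
    (hδ0 : 0 < δ) (hδ1 : δ < 1)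
    (τ : ℤ)
    (hτ : τ = ⌈(1 / ε) * Real.log ((Real.exp ε + 2 * δ - 1) / ((Real.exp ε + 1) * δ))⌉)
    (M : Multiset (Finset Ω) → PMF (Set Ω))
    (hmass : ∀ (D : Multiset (Finset Ω)) (S : Finset Ω), S ⊆ candidates D →
      M D ↑S =
        (∏ ω ∈ S, ENNReal.ofReal (releaseProb ε τ (elemCount D ω))) *
          ∏ ω ∈ candidates D \ S, ENNReal.ofReal (1 - releaseProb ε τ (elemCount D ω)))
    (hzero : ∀ (D : Multiset (Finset Ω)) (T : Set Ω),
      (¬ ∃ S : Finset Ω, ↑S = T ∧ S ⊆ candidates D) → M D T = 0) :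
    ∀ x x' : Multiset (Finset Ω),
      (∀ h ∈ x, h.card ≤ 1) → (∀ h ∈ x', h.card ≤ 1) → Adjacent x x' →
      ∀ E : Set (Set Ω),
        Pr (M x) E ≤ ENNReal.ofReal (Real.exp ε) * Pr (M x') E + ENNReal.ofReal δ := by
  have hA := one_le_pps_ratio hε.le hδ0 hδ1.le
  have hτ0 : 0 ≤ τ := hτ ▸ Int.ceil_nonneg (mul_nonneg (by positivity) (log_nonneg hA))
  have hmτ : dlapTruncMass ε τ τ ≤ δ :=
    dlapTruncMass_self_le hε hδ0 hτ0 (hτ ▸ le_exp_mul_ceil_log hε (by linarith))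
  have hM : ∀ D, IsBernoulliProduct (M D) (candidates D)
      fun ω => releaseProb ε τ (elemCount D ω) := fun D => ⟨hmass D, hzero D⟩
  rintro x x' hx hx' (⟨a, rfl⟩ | ⟨a, rfl⟩) E
  · exact (pr_cons_le hε hτ0 hmτ (hx' a (Multiset.mem_cons_self a x)) (hM x) (hM _) E).1
  · exact (pr_cons_le hε hτ0 hmτ (hx a (Multiset.mem_cons_self a x')) (hM x') (hM _) E).2
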